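/- For every x ∈ J the following are equivalent: (1) x is singular, i.e. there exists an idempotent e ∈ A with e ≠ 1 such that ex = xe = x; (2) there exists c ∈ A with c ∉ J such that cx = xc = 0. -/

import Mathlib

/-- An element `x` (of the radical `J`) is *singular* if there is an idempotent `e ≠ 1`
of the algebra with `e * x = x * e = x`; otherwise it is *regular*. -/
def IsSingular {A : Type*} [Ring A] (x : A) : Prop :=
  ∃ e : A, IsIdempotentElem e ∧ e ≠ 1 ∧ e * x = x ∧ x * e = x

/-!
If `e ≠ 1` is an idempotent fixing `x` on both sides, then `1 - e` is a nonzero idempotent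
annihilating `x`, and nonzero idempotents never lie in the Jacobson radical. Conversely, if
`c ∉ J` annihilates `x`, some power `c ^ k` is idempotent since `A` is finite, and `c ^ k ∉ J`
because, `A/J` being commutative, every maximal left ideal is prime; then `e = 1 - c ^ k` works.
-/

theorem exists_pow_isIdempotentElem {M : Type*} [Monoid M] [Finite M] (c : M) :
    ∃ k ≠ 0, IsIdempotentElem (c ^ k) := by
  obtain ⟨m, n, hmn, h⟩ := Finite.exists_ne_map_eq_of_infinite (c ^ · : ℕ → M)
  wlog hlt : m < n generalizing m n
  · exact this n m hmn.symm h.symm (by omega)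
  obtain ⟨d, rfl⟩ := Nat.exists_eq_add_of_lt hlt
  have hperiod : ∀ j, c ^ (m + j * (d + 1)) = c ^ m := by
    intro j
    induction j with
    | zero => simp
    | succ j ih =>
      rw [add_mul, one_mul, ← add_assoc, pow_add, ih, ← pow_add, ← add_assoc]
      exact h.symm
  have hperiod' : ∀ i, m ≤ i → ∀ j, c ^ (i + j * (d + 1)) = c ^ i := by
    intro i hi j
    obtain ⟨t, rfl⟩ := Nat.exists_eq_add_of_le hi
    rw [add_comm m t, add_assoc, pow_add, hperiod, ← pow_add]
  refine ⟨(m + 1) * (d + 1), by positivity, ?_⟩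
  rw [IsIdempotentElem, ← pow_add, hperiod' _ (by nlinarith) (m + 1)]

theorem isSingular_iff_exists_isIdempotentElem_annihilator {R : Type*} [Ring R] {x : R} :
    IsSingular x ↔ ∃ f : R, IsIdempotentElem f ∧ f ≠ 0 ∧ f * x = 0 ∧ x * f = 0 := by
  constructor
  · rintro ⟨e, he, he1, hex, hxe⟩
    refine ⟨1 - e, he.one_sub, sub_ne_zero.2 he1.symm, ?_, ?_⟩
    · rw [sub_mul, one_mul, hex, sub_self]
    · rw [mul_sub, mul_one, hxe, sub_self]
  · rintro ⟨f, hf, hf0, hfx, hxf⟩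
    refine ⟨1 - f, hf.one_sub, fun h => hf0 (sub_eq_self.1 h), ?_, ?_⟩
    · rw [sub_mul, one_mul, hfx, sub_zero]
    · rw [mul_sub, mul_one, hxf, sub_zero]

theorem IsIdempotentElem.eq_zero_of_mem_jacobson_bot {R : Type*} [Ring R] {f : R}
    (hf : IsIdempotentElem f) (hfJ : f ∈ (⊥ : Ideal R).jacobson) : f = 0 := by
  obtain ⟨z, hz⟩ := Ideal.mem_jacobson_iff.1 hfJ (-1)
  have hinv : z * (1 - f) = 1 := by
    rw [Ideal.mem_bot] at hz
    rw [← sub_eq_zero, ← hz]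
    noncomm_ring
  calc f = z * (1 - f) * f := by rw [hinv, one_mul]
    _ = 0 := by rw [mul_assoc, hf.one_sub_mul_self, mul_zero]

theorem Ideal.IsMaximal.isPrime_of_commutator_mem {R : Type*} [Ring R] {M : Ideal R}
    (hM : M.IsMaximal) (hcomm : ∀ a b : R, a * b - b * a ∈ M) : M.IsPrime := by
  refine ⟨hM.ne_top, fun {a b} hab => or_iff_not_imp_left.2 fun ha => ?_⟩
  obtain ⟨r, m, hm, hrm⟩ := hM.exists_inv ha
  have hb : b = (m * b - b * m) + b * m + r * (a * b) := by
    calc b = (r * a + m) * b := by rw [hrm, one_mul]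
      _ = (m * b - b * m) + b * m + r * (a * b) := by noncomm_ring
  rw [hb]
  exact M.add_mem (M.add_mem (hcomm m b) (M.mul_mem_left b hm)) (M.mul_mem_left r hab)

theorem Ideal.mem_jacobson_of_pow_mem {R : Type*} [Ring R] {I : Ideal R}
    (hcomm : ∀ a b : R, a * b - b * a ∈ I.jacobson) {a : R} {n : ℕ}
    (ha : a ^ n ∈ I.jacobson) : a ∈ I.jacobson := by
  refine Ideal.mem_sInf.2 fun M hM => ?_
  have hJM : I.jacobson ≤ M := sInf_le hM
  exact (hM.2.isPrime_of_commutator_mem fun a b => hJM (hcomm a b)).mem_of_pow_mem n (hJM ha)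

theorem singular_iff_exists_annihilator
    {F A : Type*} [Field F] [Fintype F] [Ring A] [Algebra F A] [FiniteDimensional F A]
    (J : Ideal A) (hJ : J = (⊥ : Ideal A).jacobson)
    (hred : ∀ a b : A, a * b - b * a ∈ J)
    (x : A) :
    IsSingular x ↔ ∃ c : A, c ∉ J ∧ c * x = 0 ∧ x * c = 0 := by
  subst hJ
  rw [isSingular_iff_exists_isIdempotentElem_annihilator]
  constructor
  · rintro ⟨f, hf, hf0, hfx, hxf⟩
    exact ⟨f, fun hfJ => hf0 (hf.eq_zero_of_mem_jacobson_bot hfJ), hfx, hxf⟩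
  · rintro ⟨c, hcJ, hcx, hxc⟩
    have : Finite A := Module.finite_of_finite F
    obtain ⟨k, hk, hck⟩ := exists_pow_isIdempotentElem c
    have hckJ : c ^ k ∉ (⊥ : Ideal A).jacobson := fun h =>
      hcJ (Ideal.mem_jacobson_of_pow_mem hred h)
    refine ⟨c ^ k, hck, fun h => hckJ (h ▸ zero_mem _), ?_, ?_⟩
    · rw [← Nat.succ_pred_eq_of_ne_zero hk, pow_succ, mul_assoc, hcx, mul_zero]
    · rw [← Nat.succ_pred_eq_of_ne_zero hk, pow_succ', ← mul_assoc, hxc, zero_mul]
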